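/- arXiv:2009.05242 — 2 statements merged into one kernel-verified Lean document; each statement's English description precedes it below -/
import Mathlib

section
/- Let α₁, α₂, α₃, α₄ be distinct complex numbers. There is no pair ((ξ₃,ξ₄), (ξ̃₃,ξ̃₄)) of nonzero vectors in ℂ² satisfying (α₃−α₁)ξ₃² + (α₄−α₁)ξ₄² = 0 and (α₃−α₂)ξ̃₃² + (α₄−α₂)ξ̃₄² = 0 such that the two linear forms (α₃−α₁)ξ₃X₃ + (α₄−α₁)ξ₄X₄ and (α₃−α₂)ξ̃₃X₃ + (α₄−α₂)ξ̃₄X₄ are proportional (i.e. define the same line). -/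
/-- For distinct α₁, α₂, α₃, α₄, there is no pair of nonzero
vectors (ξ₃,ξ₄), (ξ̃₃,ξ̃₄) in ℂ² with (α₃−α₁)ξ₃² + (α₄−α₁)ξ₄² = 0 and
(α₃−α₂)ξ̃₃² + (α₄−α₂)ξ̃₄² = 0 such that the linear forms
(α₃−α₁)ξ₃X₃ + (α₄−α₁)ξ₄X₄ and (α₃−α₂)ξ̃₃X₃ + (α₄−α₂)ξ̃₄X₄ are proportional,
proportionality meaning (α₃−α₁)ξ₃·(α₄−α₂)ξ̃₄ = (α₄−α₁)ξ₄·(α₃−α₂)ξ̃₃. -/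
theorem stmt14 (α₁ α₂ α₃ α₄ : ℂ)
    (h12 : α₁ ≠ α₂) (h13 : α₁ ≠ α₃) (h14 : α₁ ≠ α₄)
    (h23 : α₂ ≠ α₃) (h24 : α₂ ≠ α₄) (h34 : α₃ ≠ α₄) :
    ¬ ∃ (ξ₃ ξ₄ ξ'₃ ξ'₄ : ℂ),
      ¬(ξ₃ = 0 ∧ ξ₄ = 0) ∧ ¬(ξ'₃ = 0 ∧ ξ'₄ = 0) ∧
      (α₃ - α₁) * ξ₃ ^ 2 + (α₄ - α₁) * ξ₄ ^ 2 = 0 ∧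
      (α₃ - α₂) * ξ'₃ ^ 2 + (α₄ - α₂) * ξ'₄ ^ 2 = 0 ∧
      (α₃ - α₁) * ξ₃ * ((α₄ - α₂) * ξ'₄) =
        (α₄ - α₁) * ξ₄ * ((α₃ - α₂) * ξ'₃) := by
  rintro ⟨ξ₃, ξ₄, ξ'₃, ξ'₄, hnz, hnz', h1, h2, h3⟩
  have hA : α₃ - α₁ ≠ 0 := sub_ne_zero.mpr (Ne.symm h13)
  have hB : α₄ - α₁ ≠ 0 := sub_ne_zero.mpr (Ne.symm h14)
  have hC : α₃ - α₂ ≠ 0 := sub_ne_zero.mpr (Ne.symm h23)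
  have hD : α₄ - α₂ ≠ 0 := sub_ne_zero.mpr (Ne.symm h24)
  -- ξ₄ ≠ 0
  have hξ₄ : ξ₄ ≠ 0 := by
    rintro rfl
    have hsq : (α₃ - α₁) * ξ₃ ^ 2 = 0 := by linear_combination h1
    have : ξ₃ ^ 2 = 0 := by
      rcases mul_eq_zero.mp hsq with h | h
      · exact absurd h hA
      · exact h
    exact hnz ⟨pow_eq_zero_iff (two_ne_zero) |>.mp this, rfl⟩
  -- ξ'₃ ≠ 0
  have hξ'₃ : ξ'₃ ≠ 0 := by
    rintro rfl
    have hsq : (α₄ - α₂) * ξ'₄ ^ 2 = 0 := by linear_combination h2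
    have : ξ'₄ ^ 2 = 0 := by
      rcases mul_eq_zero.mp hsq with h | h
      · exact absurd h hD
      · exact h
    exact hnz' ⟨rfl, pow_eq_zero_iff (two_ne_zero) |>.mp this⟩
  have key : (α₄ - α₁) * (α₃ - α₂) * ξ₄ ^ 2 * ξ'₃ ^ 2 *
      ((α₃ - α₁) * (α₄ - α₂) - (α₄ - α₁) * (α₃ - α₂)) = 0 := by
    linear_combination
      ((α₃ - α₁) * (α₄ - α₂) * ξ₃ * ξ'₄ + (α₄ - α₁) * (α₃ - α₂) * ξ₄ * ξ'₃) * h3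
      + (α₃ - α₁) * (α₃ - α₂) * (α₄ - α₂) * ξ'₃ ^ 2 * h1
      - (α₃ - α₁) ^ 2 * (α₄ - α₂) * ξ₃ ^ 2 * h2
  have hdiff : (α₃ - α₁) * (α₄ - α₂) - (α₄ - α₁) * (α₃ - α₂) ≠ 0 := by
    have heq : (α₃ - α₁) * (α₄ - α₂) - (α₄ - α₁) * (α₃ - α₂)
        = (α₁ - α₂) * (α₃ - α₄) := by ring
    rw [heq]
    exact mul_ne_zero (sub_ne_zero.mpr h12) (sub_ne_zero.mpr h34)
  exact (mul_ne_zero (mul_ne_zero (mul_ne_zero (mul_ne_zero hB hC)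
    (pow_ne_zero 2 hξ₄)) (pow_ne_zero 2 hξ'₃)) hdiff) key
end

section
/- Let S ⊂ ℙ⁴ be a Segre quartic surface (degree-4 complete intersection of two quadrics with only rational double points, anticanonically embedded). Then no 2-plane P ⊂ ℙ⁴ contains a curve on S of degree greater than 2. -/
/-!
Suppose a plane `P` contains a curve `V(f) ⊆ S` with `f` irreducible of degree `d > 2`.
Restricted to `P`, each of the two quadrics defining `S` vanishes on `V(f)`, so by the
Nullstellensatz it is divisible by `f`; having degree `2 < d` it vanishes identically.
Hence `P ⊆ S`, and the lines of `P` through a fixed point give infinitely many lines on `S`.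
-/

open MvPolynomial

namespace MvPolynomial

variable {σ R : Type*} [CommSemiring R]

theorem IsHomogeneous.eq_zero_of_dvd {f r : MvPolynomial σ R} {n d : ℕ}
    (hr : r.IsHomogeneous n) (hf : f.IsHomogeneous d) (hnd : n < d) (hfr : f ∣ r) : r = 0 := by
  obtain ⟨s, rfl⟩ := hfr
  have hcomp : homogeneousComponent n (f * s) = f * s := by
    rw [homogeneousComponent_of_mem ((mem_homogeneousSubmodule _ _).2 hr), if_pos rfl]
  rw [← hcomp]
  conv_lhs => rw [← sum_homogeneousComponent s]
  rw [Finset.mul_sum, map_sum]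
  refine Finset.sum_eq_zero fun i _ => ?_
  have hmem : f * homogeneousComponent i s ∈ homogeneousSubmodule σ R (d + i) :=
    (mem_homogeneousSubmodule _ _).2 (hf.mul (homogeneousComponent_isHomogeneous i s))
  rw [homogeneousComponent_of_mem hmem, if_neg (by omega)]

variable {k ι : Type*} [Field k] [Fintype ι] [DecidableEq ι]

/-- The pullback of polynomial functions along a linear map `u : kᶥ → kˢ`. -/
noncomputable def linearSubst (u : (ι → k) →ₗ[k] (σ → k)) :
    MvPolynomial σ k →ₐ[k] MvPolynomial ι k :=
  aeval fun i => ∑ j, C (u (Pi.single j 1) i) * X j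

theorem eval_linearSubst (u : (ι → k) →ₗ[k] (σ → k)) (q : MvPolynomial σ k)
    (y : ι → k) : eval y (linearSubst u q) = eval (u y) q := by
  have hcoord : (eval y).comp (algebraMap k (MvPolynomial ι k)) = RingHom.id k := by
    ext; simp
  have hsubst : (eval y) ∘ (fun i => ∑ j, C (u (Pi.single j 1) i) * X j) = u y := by
    funext i
    conv_rhs => rw [pi_eq_sum_univ' y]
    simp [Finset.sum_apply, mul_comm]
  rw [linearSubst, aeval_def, eval₂_comp_left (eval y), hcoord, hsubst]
  rfl

theorem IsHomogeneous.linearSubst {q : MvPolynomial σ k} {n : ℕ} (hq : q.IsHomogeneous n)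
    (u : (ι → k) →ₗ[k] (σ → k)) : (linearSubst u q).IsHomogeneous n := by
  have hlin (i : σ) : (∑ j, C (u (Pi.single j 1) i) * X j : MvPolynomial ι k).IsHomogeneous 1 :=
    IsHomogeneous.sum _ _ _ fun j _ => (isHomogeneous_X _ j).C_mul _
  simpa [MvPolynomial.linearSubst] using hq.aeval _ hlin

variable [IsAlgClosed k]

/-- By the Nullstellensatz `p` lies in the prime ideal `(f)`, and `f ∣ p` is impossible
in smaller degree unless `p = 0`. -/
theorem IsHomogeneous.eq_zero_of_eval_eq_zero_of_irreducible [Finite σ]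
    {f p : MvPolynomial σ k} {n d : ℕ} (hp : p.IsHomogeneous n) (hf : f.IsHomogeneous d)
    (hirr : Irreducible f) (hnd : n < d) (hvan : ∀ y, eval y f = 0 → eval y p = 0) :
    p = 0 := by
  have hprime : (Ideal.span {f}).IsPrime :=
    (Ideal.span_singleton_prime hirr.ne_zero).2
      (UniqueFactorizationMonoid.irreducible_iff_prime.mp hirr)
  have hmem : p ∈ vanishingIdeal k (zeroLocus k (Ideal.span {f})) :=
    fun y hy => hvan y (hy f (Ideal.subset_span rfl))
  rw [vanishingIdeal_zeroLocus_eq_radical, hprime.radical] at hmem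
  exact hp.eq_zero_of_dvd hf hnd (Ideal.mem_span_singleton.mp hmem)

theorem IsHomogeneous.eval_apply_eq_zero_of_irreducible
    {u : (ι → k) →ₗ[k] (σ → k)} {f : MvPolynomial ι k} {q : MvPolynomial σ k}
    {n d : ℕ} (hq : q.IsHomogeneous n) (hf : f.IsHomogeneous d) (hirr : Irreducible f)
    (hnd : n < d)
    (hvan : ∀ y, eval y f = 0 → eval (u y) q = 0) (y : ι → k) : eval (u y) q = 0 := by
  have hpull : MvPolynomial.linearSubst u q = 0 :=
    (hq.linearSubst u).eq_zero_of_eval_eq_zero_of_irreducible hf hirr hnd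
      (by simpa only [eval_linearSubst] using hvan)
  rw [← eval_linearSubst, hpull, map_zero]

end MvPolynomial

theorem LinearMap.infinite_setOf_finrank_eq_two_le_range {K V : Type*} [Field K] [Infinite K]
    [AddCommGroup V] [Module K V] {u : (Fin 3 → K) →ₗ[K] V} (hu : Function.Injective u) :
    {W : Submodule K V | Module.finrank K W = 2 ∧ W ≤ LinearMap.range u}.Infinite := by
  set v : K → Fin 3 → K := fun c => ![1, 0, c]
  set w : Fin 3 → K := ![0, 1, 0]
  set P : K → Submodule K (Fin 3 → K) := fun c => Submodule.span K (Set.range ![v c, w])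
  have hli (c : K) : LinearIndependent K ![v c, w] := by
    rw [linearIndependent_fin2]
    exact ⟨fun h => by simpa [w] using congrFun h 1,
      fun a h => by simpa [v, w] using congrFun h 0⟩
  have hrank (c : K) : Module.finrank K ((P c).map u) = 2 := by
    rw [← (Submodule.equivMapOfInjective u hu (P c)).finrank_eq, finrank_span_eq_card (hli c)]
    simp
  have hinj : Function.Injective fun c => (P c).map u := by
    intro c c' h
    have hmem : v c ∈ P c' := by
      rw [← Submodule.map_injective_of_injective hu h]
      exact Submodule.subset_span ⟨0, rfl⟩
    obtain ⟨a, hab⟩ := (Submodule.mem_span_range_iff_exists_fun K).mp hmem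
    rw [Fin.sum_univ_two] at hab
    have h0 := congrFun hab 0
    have h2 := congrFun hab 2
    simp [v, w] at h0 h2
    rw [h0] at h2
    simpa using h2.symm
  exact Set.infinite_of_injective_forall_mem hinj fun c =>
    ⟨hrank c, LinearMap.map_le_range⟩

theorem stmt18_general (q₁ q₂ : MvPolynomial (Fin 5) ℂ)
    (hq₁ : q₁.IsHomogeneous 2) (hq₂ : q₂.IsHomogeneous 2)
    (S : Set (Fin 5 → ℂ))
    (hS : S = {x | eval x q₁ = 0 ∧ eval x q₂ = 0})
    (hfinlines : {W : Submodule ℂ (Fin 5 → ℂ) |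
      Module.finrank ℂ W = 2 ∧ (W : Set (Fin 5 → ℂ)) ⊆ S}.Finite) :
    ¬ ∃ (u : (Fin 3 → ℂ) →ₗ[ℂ] (Fin 5 → ℂ)) (f : MvPolynomial (Fin 3) ℂ)
        (d : ℕ),
      Function.Injective u ∧ Irreducible f ∧ f.IsHomogeneous d ∧ 2 < d ∧
        u '' {y | eval y f = 0} ⊆ S := by
  rintro ⟨u, f, d, hu, hirr, hf, hd, hcurve⟩
  subst hS
  have hplane : (LinearMap.range u : Set (Fin 5 → ℂ)) ⊆
      {x | eval x q₁ = 0 ∧ eval x q₂ = 0} := by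
    rintro _ ⟨y, rfl⟩
    exact ⟨hq₁.eval_apply_eq_zero_of_irreducible hf hirr hd
        (fun z hz => (hcurve ⟨z, hz, rfl⟩).1) y,
      hq₂.eval_apply_eq_zero_of_irreducible hf hirr hd
        (fun z hz => (hcurve ⟨z, hz, rfl⟩).2) y⟩
  refine (LinearMap.infinite_setOf_finrank_eq_two_le_range hu).mono ?_ hfinlines
  exact fun _ hW => ⟨hW.1, (SetLike.coe_mono hW.2).trans hplane⟩

/-- Let S ⊂ ℙ⁴ be a Segre quartic surface, realized (via its
affine cone in ℂ⁵) as the common zero locus of two homogeneous quadrics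
q₁, q₂, irreducible, nondegenerate (contained in no hyperplane), and carrying
only finitely many lines (lines correspond to 2-dimensional linear subspaces
whose cone lies in S).  Then no 2-plane P ⊂ ℙ⁴ (the projectivization of a
3-dimensional subspace, parametrized by an injective linear map
u : ℂ³ → ℂ⁵) contains a curve on S of degree greater than 2 (i.e. the zero
cone, inside P, of an irreducible homogeneous polynomial f of degree d > 2
in the coordinates of P). -/
theorem stmt18 (q₁ q₂ : MvPolynomial (Fin 5) ℂ)
    (hq₁ : q₁.IsHomogeneous 2) (hq₂ : q₂.IsHomogeneous 2)
    (S : Set (Fin 5 → ℂ))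
    (hS : S = {x | eval x q₁ = 0 ∧ eval x q₂ = 0})
    (hirr : IsIrreducible S)
    (hnondeg : ¬ ∃ φ : (Fin 5 → ℂ) →ₗ[ℂ] ℂ, φ ≠ 0 ∧ ∀ x ∈ S, φ x = 0)
    (hfinlines : {W : Submodule ℂ (Fin 5 → ℂ) |
      Module.finrank ℂ W = 2 ∧ (W : Set (Fin 5 → ℂ)) ⊆ S}.Finite) :
    ¬ ∃ (u : (Fin 3 → ℂ) →ₗ[ℂ] (Fin 5 → ℂ)) (f : MvPolynomial (Fin 3) ℂ)
        (d : ℕ),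
      Function.Injective u ∧ Irreducible f ∧ f.IsHomogeneous d ∧ 2 < d ∧
        u '' {y | eval y f = 0} ⊆ S :=
  stmt18_general q₁ q₂ hq₁ hq₂ S hS hfinlines
end
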